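/- Let A = ℂ[x₁₁, x₁₂, x₁₃, x₂₁, x₂₂, x₂₃, x₃₁, x₃₂, x₃₃] and I = ⟨x₃₁, x₃₂, x₃₃, x₁₁ + x₂₂, x₁₂x₂₁ + x₂₂², x₁₂x₂₃ − x₁₃x₂₂⟩. Then the Krull dimension of the quotient ring A/I is 3. Moreover, the Krull dimensions of A/p₁ and A/p₂ are both 3, where p₁ = ⟨x₁₁, x₁₂, x₂₂, x₃₁, x₃₂, x₃₃⟩ and p₂ = ⟨x₃₁, x₃₂, x₃₃, x₁₁+x₂₂, x₁₂x₂₁+x₂₂², x₁₂x₂₃−x₁₃x₂₂, x₁₃x₂₁+x₂₂x₂₃⟩. -/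

import Mathlib

/-!
Modulo `I` we have `x₁₂ x₂₃ = x₁₃ x₂₂` and `x₂₂² = -x₁₂ x₂₁`, so with `y = x₁₂ + x₂₃` the class of
`x₁₂` is a root of the monic quartic `T² (T - y)² + x₁₃² x₂₁ T`, and then `x₂₂` is integral too.
Hence `A/I` is integral over `ℂ[x₂₁, x₁₃, y]` and has dimension at most 3. Both `p₁` and `p₂`
contain `I`, so the same bound holds for their quotients.

Conversely `p₁` and `p₂` lie in the kernels of the parametrisations
`(c, b, a) ↦ [[0, 0, c], [b, 0, a], [0, 0, 0]]` and `(c, b, a) ↦ (b, -a, 0)ᵀ (a, b, c)`.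
Setting the parameters to zero one at a time gives a chain of four prime kernels above each of them,
so both quotients, and therefore also `A/I`, have dimension at least 3.
-/

open MvPolynomial

section
variable {R S : Type*} [CommRing R] [CommRing S]

theorem ringKrullDim_quotient_le_of_le {I J : Ideal R} (h : I ≤ J) :
    ringKrullDim (R ⧸ J) ≤ ringKrullDim (R ⧸ I) :=
  ringKrullDim_le_of_surjective (Ideal.Quotient.factor h) (Ideal.Quotient.factor_surjective h)

theorem ringKrullDim_le_of_isIntegral [Algebra R S] [Algebra.IsIntegral R S] :
    ringKrullDim S ≤ ringKrullDim R :=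
  Order.krullDim_le_of_strictMono (PrimeSpectrum.comap (algebraMap R S))
    fun _ _ h => Ideal.IsIntegral.comap_lt_comap (R := R) h

theorem ringKrullDim_adjoin_le {K : Type*} [Field K] [Algebra K S] {ι : Type*} [Finite ι]
    (y : ι → S) : ringKrullDim (Algebra.adjoin K (Set.range y)) ≤ Nat.card ι := by
  rw [Algebra.adjoin_range_eq_range_aeval]
  calc ringKrullDim (aeval y).range
      ≤ ringKrullDim (MvPolynomial ι K) :=
        ringKrullDim_le_of_surjective (aeval y).rangeRestrict.toRingHom
          (aeval y).rangeRestrict_surjective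
    _ = Nat.card ι := by simp [ringKrullDim_eq_zero_of_field]

theorem le_ringKrullDim_quotient_of_strictMono {n : ℕ} (J : Ideal R) (q : Fin (n + 1) → Ideal R)
    [∀ i, (q i).IsPrime] (hq : StrictMono q) (hJ : J ≤ q 0) : n ≤ ringKrullDim (R ⧸ J) := by
  rw [ringKrullDim_quotient]
  let l : LTSeries (PrimeSpectrum.zeroLocus (R := R) J) :=
    ⟨n, fun i => ⟨⟨q i, inferInstance⟩, (hJ.trans (hq.monotone (Fin.zero_le i)) :)⟩,
      fun i => hq (Fin.castSucc_lt_succ)⟩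
  exact_mod_cast Order.LTSeries.length_le_krullDim l

theorem isIntegral_of_mul_sub_eq_of_sq_eq [Algebra R S] {a b c : R} {u s : S}
    (hu : u * (algebraMap R S a - u) = algebraMap R S b * s)
    (hs : s ^ 2 = algebraMap R S c * u) : IsIntegral R u := by
  refine ⟨Polynomial.X ^ 2 * (Polynomial.X - Polynomial.C a) ^ 2 -
    Polynomial.C (b ^ 2 * c) * Polynomial.X, ?_, ?_⟩
  · monicity!
  · simp only [Polynomial.eval₂_sub, Polynomial.eval₂_mul, Polynomial.eval₂_pow, Polynomial.eval₂_X,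
      Polynomial.eval₂_C, map_mul, map_pow]
    linear_combination (u * (algebraMap R S a - u) + algebraMap R S b * s) * hu +
      algebraMap R S b ^ 2 * hs

theorem MvPolynomial.isIntegral_quotient_of_isIntegral_X {K σ : Type*} [CommRing K]
    {I : Ideal (MvPolynomial σ K)} (B : Subalgebra K (MvPolynomial σ K ⧸ I))
    (h : ∀ i, IsIntegral B (Ideal.Quotient.mk I (X i))) :
    Algebra.IsIntegral B (MvPolynomial σ K ⧸ I) := by
  refine ⟨fun x => ?_⟩
  obtain ⟨f, rfl⟩ := Ideal.Quotient.mk_surjective x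
  induction f using MvPolynomial.induction_on with
  | C a => exact isIntegral_algebraMap (x := algebraMap K B a)
  | add f g hf hg => rw [map_add]; exact hf.add hg
  | mul_X f i hf => rw [map_mul]; exact hf.mul (h i)

variable (K : Type*) [CommRing K] (n : ℕ)

noncomputable def killFirst (k : ℕ) : MvPolynomial (Fin n) K →ₐ[K] MvPolynomial (Fin n) K :=
  aeval fun j => if (j : ℕ) < k then 0 else X j

variable {K n}

theorem killFirst_comp_of_le {k l : ℕ} (h : k ≤ l) :
    (killFirst K n l).comp (killFirst K n k) = killFirst K n l := by
  refine algHom_ext fun j => ?_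
  by_cases hj : (j : ℕ) < k
  · simp [killFirst, hj, hj.trans_le h]
  · simp [killFirst, hj]

theorem le_ringKrullDim_quotient_of_killFirst [IsDomain K] (J : Ideal R)
    (φ : R →+* MvPolynomial (Fin n) K) (hJ : J ≤ RingHom.ker φ)
    (hx : ∀ k < n, ∃ x, killFirst K n (k + 1) (φ x) = 0 ∧ killFirst K n k (φ x) ≠ 0) :
    n ≤ ringKrullDim (R ⧸ J) := by
  let q : Fin (n + 1) → Ideal R := fun k => RingHom.ker ((killFirst K n k).toRingHom.comp φ)
  have hq : StrictMono q := by
    refine Fin.strictMono_iff_lt_succ.mpr fun k => lt_of_le_of_ne (fun x hx => ?_) fun heq => ?_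
    · have hcomp := congr($(killFirst_comp_of_le (K := K) (n := n) (Nat.le_succ k)) (φ x))
      simp only [q, RingHom.mem_ker, RingHom.comp_apply, AlgHom.toRingHom_eq_coe, RingHom.coe_coe,
        Fin.val_castSucc, Fin.val_succ, AlgHom.comp_apply] at hx hcomp ⊢
      rw [← hcomp, hx, map_zero]
    · obtain ⟨x, hx0, hx⟩ := hx k k.isLt
      have hxq : x ∈ q k.succ := by simpa [q] using hx0
      rw [← heq] at hxq
      exact hx (by simpa [q] using hxq)
  have (k : Fin (n + 1)) : (q k).IsPrime := RingHom.ker_isPrime _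
  refine le_ringKrullDim_quotient_of_strictMono J q hq fun x hx => ?_
  simp [q, RingHom.mem_ker.mp (hJ hx)]

end

namespace KrullDimThree

local notation "𝔸" => MvPolynomial (Fin 3 × Fin 3) ℂ

noncomputable def I : Ideal 𝔸 :=
  Ideal.span {X (2, 0), X (2, 1), X (2, 2), X (0, 0) + X (1, 1),
    X (0, 1) * X (1, 0) + X (1, 1) ^ 2, X (0, 1) * X (1, 2) - X (0, 2) * X (1, 1)}

noncomputable def p₁ : Ideal 𝔸 :=
  Ideal.span {X (0, 0), X (0, 1), X (1, 1), X (2, 0), X (2, 1), X (2, 2)}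

noncomputable def p₂ : Ideal 𝔸 :=
  Ideal.span {X (2, 0), X (2, 1), X (2, 2), X (0, 0) + X (1, 1),
    X (0, 1) * X (1, 0) + X (1, 1) ^ 2, X (0, 1) * X (1, 2) - X (0, 2) * X (1, 1),
    X (0, 2) * X (1, 0) + X (1, 1) * X (1, 2)}

theorem I_le_p₁ : I ≤ p₁ := by
  rw [I, Ideal.span_le]
  have h {p : Fin 3 × Fin 3} (hp : X p ∈ ({X (0, 0), X (0, 1), X (1, 1), X (2, 0), X (2, 1),
      X (2, 2)} : Set 𝔸)) : X p ∈ p₁ := Ideal.subset_span hp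
  rintro _ (rfl | rfl | rfl | rfl | rfl | rfl)
  · exact h (by simp)
  · exact h (by simp)
  · exact h (by simp)
  · exact add_mem (h (by simp)) (h (by simp))
  · exact add_mem (Ideal.mul_mem_right _ _ (h (by simp)))
      (Ideal.pow_mem_of_mem _ (h (by simp)) 2 two_pos)
  · exact sub_mem (Ideal.mul_mem_right _ _ (h (by simp))) (Ideal.mul_mem_left _ _ (h (by simp)))

theorem I_le_p₂ : I ≤ p₂ :=
  Ideal.span_mono fun _ hx => by simp only [Set.mem_insert_iff, Set.mem_singleton_iff] at hx ⊢; tauto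

theorem ringKrullDim_quotient_I_le : ringKrullDim (𝔸 ⧸ I) ≤ 3 := by
  let g : Fin 3 × Fin 3 → 𝔸 ⧸ I := fun p => Ideal.Quotient.mk I (X p)
  have rel {f : 𝔸} (hf : f ∈ ({X (2, 0), X (2, 1), X (2, 2), X (0, 0) + X (1, 1),
      X (0, 1) * X (1, 0) + X (1, 1) ^ 2, X (0, 1) * X (1, 2) - X (0, 2) * X (1, 1)} : Set 𝔸)) :
      Ideal.Quotient.mk I f = 0 :=
    Ideal.Quotient.eq_zero_iff_mem.mpr (Ideal.subset_span hf)
  have hrow (j : Fin 3) : g (2, j) = 0 := rel (by fin_cases j <;> simp)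
  have htrace : g (0, 0) = -g (1, 1) := by
    have h := rel (f := X (0, 0) + X (1, 1)) (by simp)
    simp only [map_add] at h
    linear_combination h
  have hsq : g (1, 1) ^ 2 = -g (1, 0) * g (0, 1) := by
    have h := rel (f := X (0, 1) * X (1, 0) + X (1, 1) ^ 2) (by simp)
    simp only [map_add, map_mul, map_pow] at h
    linear_combination h
  have hminor : g (0, 1) * g (1, 2) = g (0, 2) * g (1, 1) := by
    have h := rel (f := X (0, 1) * X (1, 2) - X (0, 2) * X (1, 1)) (by simp)
    simp only [map_sub, map_mul] at h
    linear_combination h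
  let y : Fin 3 → 𝔸 ⧸ I := ![g (1, 0), g (0, 2), g (0, 1) + g (1, 2)]
  let B := Algebra.adjoin ℂ (Set.range y)
  have mem (i : Fin 3) : y i ∈ B := Algebra.subset_adjoin ⟨i, rfl⟩
  have hB (i : Fin 3) : IsIntegral B (y i) := isIntegral_algebraMap (x := (⟨y i, mem i⟩ : B))
  have hu : IsIntegral B (g (0, 1)) :=
    isIntegral_of_mul_sub_eq_of_sq_eq (a := (⟨_, mem 2⟩ : B)) (b := (⟨_, mem 1⟩ : B))
      (c := -(⟨_, mem 0⟩ : B)) (by simpa [y] using hminor) (by simpa [y] using hsq)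
  have hs : IsIntegral B (g (1, 1)) :=
    IsIntegral.of_pow two_pos (hsq ▸ (hB 0).neg.mul hu)
  have : Algebra.IsIntegral B (𝔸 ⧸ I) := by
    refine MvPolynomial.isIntegral_quotient_of_isIntegral_X B fun p => ?_
    fin_cases p
    · simpa [g, htrace] using hs.neg
    · exact hu
    · exact hB 1
    · exact hB 0
    · exact hs
    · simpa [y, g] using (hB 2).sub hu
    all_goals simpa [g, hrow] using isIntegral_zero
  calc ringKrullDim (𝔸 ⧸ I) ≤ ringKrullDim B := ringKrullDim_le_of_isIntegral
    _ ≤ Nat.card (Fin 3) := ringKrullDim_adjoin_le y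
    _ = 3 := by simp

theorem three_le_ringKrullDim_quotient_p₁ : 3 ≤ ringKrullDim (𝔸 ⧸ p₁) := by
  let φ : 𝔸 →ₐ[ℂ] MvPolynomial (Fin 3) ℂ :=
    aeval fun p => ![![0, 0, X 0], ![X 1, 0, X 2], ![0, 0, 0]] p.1 p.2
  have hp₁ : p₁ ≤ RingHom.ker φ.toRingHom := by
    rw [p₁, Ideal.span_le]
    rintro _ (rfl | rfl | rfl | rfl | rfl | rfl) <;> simp [φ]
  have witness (k : ℕ) (hk : k < 3) :
      ∃ x, killFirst ℂ 3 (k + 1) (φ x) = 0 ∧ killFirst ℂ 3 k (φ x) ≠ 0 := by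
    interval_cases k
    · exact ⟨X (0, 2), by simp [φ, killFirst], by simp [φ, killFirst]⟩
    · exact ⟨X (1, 0), by simp [φ, killFirst], by simp [φ, killFirst]⟩
    · exact ⟨X (1, 2), by simp [φ, killFirst], by simp [φ, killFirst]⟩
  exact_mod_cast le_ringKrullDim_quotient_of_killFirst p₁ φ.toRingHom hp₁ witness

theorem three_le_ringKrullDim_quotient_p₂ : 3 ≤ ringKrullDim (𝔸 ⧸ p₂) := by
  let φ : 𝔸 →ₐ[ℂ] MvPolynomial (Fin 3) ℂ :=
    aeval fun p => ![X 1, -X 2, 0] p.1 * ![X 2, X 1, X 0] p.2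
  have hp₂ : p₂ ≤ RingHom.ker φ.toRingHom := by
    rw [p₂, Ideal.span_le]
    rintro _ (rfl | rfl | rfl | rfl | rfl | rfl | rfl) <;> simp [φ] <;> ring
  have witness (k : ℕ) (hk : k < 3) :
      ∃ x, killFirst ℂ 3 (k + 1) (φ x) = 0 ∧ killFirst ℂ 3 k (φ x) ≠ 0 := by
    interval_cases k
    · exact ⟨X (0, 2), by simp [φ, killFirst], by simp [φ, killFirst]⟩
    · exact ⟨X (0, 1), by simp [φ, killFirst], by simp [φ, killFirst]⟩
    · exact ⟨X (1, 0), by simp [φ, killFirst], by simp [φ, killFirst]⟩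
  exact_mod_cast le_ringKrullDim_quotient_of_killFirst p₂ φ.toRingHom hp₂ witness

end KrullDimThree

theorem krull_dimension_three :
    ringKrullDim (MvPolynomial (Fin 3 × Fin 3) ℂ ⧸
      (Ideal.span {(X (2, 0) : MvPolynomial (Fin 3 × Fin 3) ℂ), X (2, 1), X (2, 2),
        X (0, 0) + X (1, 1),
        X (0, 1) * X (1, 0) + X (1, 1) ^ 2,
        X (0, 1) * X (1, 2) - X (0, 2) * X (1, 1)})) = 3 ∧
    ringKrullDim (MvPolynomial (Fin 3 × Fin 3) ℂ ⧸
      (Ideal.span {(X (0, 0) : MvPolynomial (Fin 3 × Fin 3) ℂ), X (0, 1), X (1, 1),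
        X (2, 0), X (2, 1), X (2, 2)})) = 3 ∧
    ringKrullDim (MvPolynomial (Fin 3 × Fin 3) ℂ ⧸
      (Ideal.span {(X (2, 0) : MvPolynomial (Fin 3 × Fin 3) ℂ), X (2, 1), X (2, 2),
        X (0, 0) + X (1, 1),
        X (0, 1) * X (1, 0) + X (1, 1) ^ 2,
        X (0, 1) * X (1, 2) - X (0, 2) * X (1, 1),
        X (0, 2) * X (1, 0) + X (1, 1) * X (1, 2)})) = 3 := by
  have upper := KrullDimThree.ringKrullDim_quotient_I_le
  have lower₁ := KrullDimThree.three_le_ringKrullDim_quotient_p₁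
  have lower₂ := KrullDimThree.three_le_ringKrullDim_quotient_p₂
  have le₁ := ringKrullDim_quotient_le_of_le KrullDimThree.I_le_p₁
  have le₂ := ringKrullDim_quotient_le_of_le KrullDimThree.I_le_p₂
  exact ⟨upper.antisymm (lower₂.trans le₂), (le₁.trans upper).antisymm lower₁,
    (le₂.trans upper).antisymm lower₂⟩
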